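/- For any n-qubit unitary U, the operator U ⊗ U† equals S · Π_{i=1}^n (U† S_i U), where S is the 2n-qubit global SWAP operator exchanging the first n qubits with the last n qubits, and S_i is the two-qubit SWAP acting on qubit pair (i, n+i). -/
import Mathlib


open Matrix Kronecker

/-- The global SWAP on 2n qubits, exchanging the first n qubits with the last n qubits:
`S (u ⊗ v) = v ⊗ u` for `u, v` in the n-qubit space. -/
def gSwap (n : ℕ) :
    Matrix ((Fin n → Fin 2) × (Fin n → Fin 2)) ((Fin n → Fin 2) × (Fin n → Fin 2)) ℂ :=
  fun x y => if x.1 = y.2 ∧ x.2 = y.1 then 1 else 0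

/-- The two-qubit SWAP acting on the qubit pair (i, n+i) of a 2n-qubit register. -/
def qSwap (n : ℕ) (i : Fin n) :
    Matrix ((Fin n → Fin 2) × (Fin n → Fin 2)) ((Fin n → Fin 2) × (Fin n → Fin 2)) ℂ :=
  fun x y =>
    if x.1 = Function.update y.1 i (y.2 i) ∧ x.2 = Function.update y.2 i (y.1 i) then 1 else 0

namespace SwapAux

variable {n : ℕ}

/-- Left multiplication by a permutation matrix (of an involutive map). -/
lemma permMat_mul {α : Type*} [Fintype α] [DecidableEq α]
    (S M : Matrix α α ℂ) (e : α → α) (he : ∀ x, e (e x) = x)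
    (hS : ∀ a b, S a b = if a = e b then 1 else 0) (x y : α) :
    (S * M) x y = M (e x) y := by
  rw [Matrix.mul_apply]
  have key : ∀ z, S x z * M z y = if z = e x then M z y else 0 := by
    intro z
    rw [hS]
    by_cases h : z = e x
    · subst h; simp [he]
    · have hx : x ≠ e z := by
        intro hx; exact h (by rw [hx, he])
      simp [hx, h]
  simp only [key]
  simp

/-- Right multiplication by a permutation matrix. -/
lemma mul_permMat {α : Type*} [Fintype α] [DecidableEq α]
    (S M : Matrix α α ℂ) (e : α → α)
    (hS : ∀ a b, S a b = if a = e b then 1 else 0) (x y : α) :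
    (M * S) x y = M x (e y) := by
  rw [Matrix.mul_apply]
  have key : ∀ z, M x z * S z y = if z = e y then M x z else 0 := by
    intro z
    rw [hS]
    by_cases h : z = e y <;> simp [h]
  simp only [key]
  simp

/-- The underlying involution of `qSwap n i`. -/
def sw (n : ℕ) (i : Fin n) (y : (Fin n → Fin 2) × (Fin n → Fin 2)) :
    (Fin n → Fin 2) × (Fin n → Fin 2) :=
  (Function.update y.1 i (y.2 i), Function.update y.2 i (y.1 i))

lemma sw_sw (i : Fin n) (y : (Fin n → Fin 2) × (Fin n → Fin 2)) : sw n i (sw n i y) = y := by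
  unfold sw
  simp

lemma qSwap_eq (i : Fin n) (x y : (Fin n → Fin 2) × (Fin n → Fin 2)) :
    qSwap n i x y = if x = sw n i y then 1 else 0 := by
  simp [qSwap, sw, Prod.ext_iff]

lemma gSwap_eq (x y : (Fin n → Fin 2) × (Fin n → Fin 2)) :
    gSwap n x y = if x = Prod.swap y then 1 else 0 := by
  simp [gSwap, Prod.ext_iff, Prod.swap]

def mix (l : List (Fin n)) (a b : Fin n → Fin 2) : Fin n → Fin 2 :=
  fun j => if j ∈ l then b j else a j

def pSwap (n : ℕ) (l : List (Fin n)) :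
    Matrix ((Fin n → Fin 2) × (Fin n → Fin 2)) ((Fin n → Fin 2) × (Fin n → Fin 2)) ℂ :=
  Matrix.of fun x y => if x = (mix l y.1 y.2, mix l y.2 y.1) then 1 else 0

lemma mix_nil (a b : Fin n → Fin 2) : mix [] a b = a := by
  funext j; simp [mix]

lemma pSwap_nil : pSwap n [] = 1 := by
  ext x y
  simp [pSwap, mix_nil, Matrix.one_apply]

lemma update_mix {i : Fin n} {t : List (Fin n)} (hit : i ∉ t) (a b : Fin n → Fin 2) :
    Function.update (mix t a b) i (b i) = mix (i :: t) a b := by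
  funext j
  by_cases h : j = i
  · subst h; simp [mix, Function.update]
  · simp [mix, Function.update, h]

lemma sw_mix {i : Fin n} {t : List (Fin n)} (hit : i ∉ t) (a b : Fin n → Fin 2) :
    sw n i (mix t a b, mix t b a) = (mix (i :: t) a b, mix (i :: t) b a) := by
  have h1 : mix t a b i = a i := by simp [mix, hit]
  have h2 : mix t b a i = b i := by simp [mix, hit]
  unfold sw
  simp only [h1, h2]
  rw [update_mix hit, update_mix hit]

lemma map_qSwap_prod (l : List (Fin n)) (hl : l.Nodup) :
    (l.map (qSwap n)).prod = pSwap n l := by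
  induction l with
  | nil => simp [pSwap_nil]
  | cons i t ih =>
    have hit : i ∉ t := (List.nodup_cons.mp hl).1
    rw [List.map_cons, List.prod_cons, ih (List.nodup_cons.mp hl).2]
    ext x y
    rw [permMat_mul (qSwap n i) _ (sw n i) (sw_sw i) (qSwap_eq i)]
    show pSwap n t (sw n i x) y = pSwap n (i :: t) x y
    simp only [pSwap, Matrix.of_apply]
    have hcond : sw n i x = (mix t y.1 y.2, mix t y.2 y.1) ↔
        x = (mix (i :: t) y.1 y.2, mix (i :: t) y.2 y.1) := by
      rw [← sw_mix hit]
      constructor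
      · intro h
        have := congrArg (sw n i) h
        rwa [sw_sw] at this
      · intro h; rw [h, sw_sw]
    simp [hcond]

lemma mix_finRange (a b : Fin n → Fin 2) : mix (List.finRange n) a b = b := by
  funext j; simp [mix]

lemma pSwap_finRange : pSwap n (List.finRange n) = gSwap n := by
  ext x y
  simp [pSwap, mix_finRange, gSwap, Prod.ext_iff]

lemma conj_prod {α : Type*} [Fintype α] [DecidableEq α]
    (V : Matrix α α ℂ) (hV : V * Vᴴ = 1) (hV' : Vᴴ * V = 1)
    (l : List (Matrix α α ℂ)) :
    (l.map (fun A => Vᴴ * A * V)).prod = Vᴴ * l.prod * V := by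
  induction l with
  | nil => simp [hV']
  | cons a t ih =>
    rw [List.map_cons, List.prod_cons, ih, List.prod_cons]
    simp only [Matrix.mul_assoc]
    rw [← Matrix.mul_assoc V Vᴴ, hV, Matrix.one_mul]

lemma gSwap_mul_gSwap : gSwap n * gSwap n = 1 := by
  ext x y
  rw [permMat_mul (gSwap n) (gSwap n) Prod.swap Prod.swap_swap gSwap_eq, gSwap_eq,
    Matrix.one_apply]
  simp [Prod.ext_iff, eq_comm, and_comm]

lemma gSwap_mul_kron (A B : Matrix (Fin n → Fin 2) (Fin n → Fin 2) ℂ) :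
    gSwap n * (A ⊗ₖ B) = (B ⊗ₖ A) * gSwap n := by
  ext x y
  rw [permMat_mul (gSwap n) _ Prod.swap Prod.swap_swap gSwap_eq,
    mul_permMat (gSwap n) _ Prod.swap gSwap_eq]
  simp [Matrix.kroneckerMap_apply, mul_comm]

lemma kron_conjTranspose (A B : Matrix (Fin n → Fin 2) (Fin n → Fin 2) ℂ) :
    (A ⊗ₖ B)ᴴ = Aᴴ ⊗ₖ Bᴴ := by
  ext x y
  simp [Matrix.conjTranspose_apply, Matrix.kroneckerMap_apply]

end SwapAux

open SwapAux in
/-- For any n-qubit unitary U, `U ⊗ U† = S · Π_{i=1}^n (U† Sᵢ U)`, where `U` acts as `U ⊗ I`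
on the 2n-qubit space inside the product, taken in order i = 1 to n. -/
theorem unitary_tensor_conj_eq_swap_prod (n : ℕ)
    (U : Matrix (Fin n → Fin 2) (Fin n → Fin 2) ℂ)
    (hU : U ∈ Matrix.unitaryGroup (Fin n → Fin 2) ℂ) :
    U ⊗ₖ Uᴴ =
      gSwap n *
        (List.ofFn (fun i : Fin n =>
          (U ⊗ₖ (1 : Matrix (Fin n → Fin 2) (Fin n → Fin 2) ℂ))ᴴ * qSwap n i *
            (U ⊗ₖ (1 : Matrix (Fin n → Fin 2) (Fin n → Fin 2) ℂ)))).prod := by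
  have hU1 : U * Uᴴ = 1 := (Matrix.mem_unitaryGroup_iff.mp hU)
  have hU2 : Uᴴ * U = 1 := (Matrix.mem_unitaryGroup_iff'.mp hU)
  set V : Matrix ((Fin n → Fin 2) × (Fin n → Fin 2))
      ((Fin n → Fin 2) × (Fin n → Fin 2)) ℂ := U ⊗ₖ 1 with hVdef
  have hVH : Vᴴ = Uᴴ ⊗ₖ 1 := by
    rw [hVdef, kron_conjTranspose, Matrix.conjTranspose_one]
  have hV1 : V * Vᴴ = 1 := by
    rw [hVdef, hVH, ← Matrix.mul_kronecker_mul, hU1, Matrix.one_mul,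
      Matrix.one_kronecker_one]
  have hV2 : Vᴴ * V = 1 := by
    rw [hVdef, hVH, ← Matrix.mul_kronecker_mul, hU2, Matrix.one_mul,
      Matrix.one_kronecker_one]
  have hprod : (List.ofFn (fun i : Fin n => Vᴴ * qSwap n i * V)).prod
      = Vᴴ * gSwap n * V := by
    rw [List.ofFn_eq_map]
    have : (List.finRange n).map (fun i => Vᴴ * qSwap n i * V)
        = ((List.finRange n).map (qSwap n)).map (fun A => Vᴴ * A * V) := by
      rw [List.map_map]; rfl
    rw [this, conj_prod V hV1 hV2, map_qSwap_prod _ (List.nodup_finRange n),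
      pSwap_finRange]
  rw [hprod, hVH, ← Matrix.mul_assoc, ← Matrix.mul_assoc, gSwap_mul_kron,
    Matrix.mul_assoc (1 ⊗ₖ Uᴴ), gSwap_mul_gSwap, Matrix.mul_one, hVdef,
    ← Matrix.mul_kronecker_mul, Matrix.one_mul, Matrix.mul_one]
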